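/- Let ϑ_N: (G,P) → (ℤ^N, ℤ₊^N) and ϑ_M: (H,S) → (ℤ^M, ℤ₊^M) be controlled maps with the minimality property, and let α: H → Aut(G) restrict to automorphisms of P and satisfy ϑ_N ∘ α_h = ϑ_N for all h ∈ H. Then the induced map ϑ: (G ⋊_α H, P ⋊_α S) → (ℤ^{N+M}, ℤ₊^{N+M}), ϑ(gh) = (ϑ_N(g), ϑ_M(h)), is a controlled map with the minimality property. -/

import Mathlib

/-- A quasi-lattice ordered group structure on a group `G`: a positive cone `P`
(submonoid with `P ∩ P⁻¹ = {1}`) such that any two elements of `P` with a common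
upper bound (for the left-invariant order `g ≤ h ↔ g⁻¹ * h ∈ P`) have a least
common upper bound in `P`. -/
structure QuasiLattice (G : Type*) [Group G] where
  P : Set G
  one_mem : (1 : G) ∈ P
  mul_mem : ∀ {a b : G}, a ∈ P → b ∈ P → a * b ∈ P
  antisymm' : ∀ g ∈ P, g⁻¹ ∈ P → g = 1
  lub_exists : ∀ p ∈ P, ∀ q ∈ P,
    (∃ r ∈ P, p⁻¹ * r ∈ P ∧ q⁻¹ * r ∈ P) →
    ∃ r ∈ P, p⁻¹ * r ∈ P ∧ q⁻¹ * r ∈ P ∧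
      ∀ s ∈ P, p⁻¹ * s ∈ P → q⁻¹ * s ∈ P → r⁻¹ * s ∈ P

namespace QuasiLattice

variable {G G' : Type*} [Group G] [Group G']

/-- The left-invariant partial order induced by the positive cone. -/
def le (Q : QuasiLattice G) (g h : G) : Prop := g⁻¹ * h ∈ Q.P

/-- `p` and `q` have a common upper bound in `P` (i.e. `p ∨ q < ∞`). -/
def HasCUB (Q : QuasiLattice G) (p q : G) : Prop := ∃ r ∈ Q.P, Q.le p r ∧ Q.le q r

/-- `r` is the least common upper bound of `p` and `q` in `P`. -/
def IsLub (Q : QuasiLattice G) (p q r : G) : Prop :=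
  r ∈ Q.P ∧ Q.le p r ∧ Q.le q r ∧ ∀ s ∈ Q.P, Q.le p s → Q.le q s → Q.le r s

end QuasiLattice

/-- A controlled map between quasi-lattice ordered groups: an order-preserving group
homomorphism, finite-to-one on `P`, respecting least upper bounds. -/
structure ControlledMap {G G' : Type*} [Group G] [Group G']
    (Q : QuasiLattice G) (Q' : QuasiLattice G') where
  toFun : G →* G'
  mapsP : ∀ p ∈ Q.P, toFun p ∈ Q'.P
  finite_fibers : ∀ g' : G', {p | p ∈ Q.P ∧ toFun p = g'}.Finite
  map_lub : ∀ p ∈ Q.P, ∀ q ∈ Q.P, ∀ r, Q.IsLub p q r →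
    Q'.IsLub (toFun p) (toFun q) (toFun r)

namespace ControlledMap

variable {G G' : Type*} [Group G] [Group G'] {Q : QuasiLattice G} {Q' : QuasiLattice G'}

/-- `p` is a minimal element of `ϑ⁻¹([m,∞]) ∩ P`. -/
def Minimal (θ : ControlledMap Q Q') (m : G') (p : G) : Prop :=
  p ∈ Q.P ∧ Q'.le m (θ.toFun p) ∧
    ∀ r ∈ Q.P, Q'.le m (θ.toFun r) → Q.le r p → r = p

/-- The minimality property of a controlled map: distinct minimal elements of
`ϑ⁻¹([m,∞]) ∩ P` have no common upper bound in `P`. -/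
def MinimalityProperty (θ : ControlledMap Q Q') : Prop :=
  ∀ m ∈ Q'.P, ∀ p q : G, θ.Minimal m p → θ.Minimal m q → p ≠ q → ¬ Q.HasCUB p q

end ControlledMap

/-- The quasi-lattice ordered group `(ℤ^κ, ℤ₊^κ)` (written multiplicatively). -/
def ZQL (κ : Type*) : QuasiLattice (Multiplicative (κ → ℤ)) where
  P := {x | ∀ i, 0 ≤ Multiplicative.toAdd x i}
  one_mem := fun i => le_refl 0
  mul_mem := fun {a b} ha hb i => add_nonneg (ha i) (hb i)
  antisymm' := fun g hg hg' => by
    have h : ∀ i, Multiplicative.toAdd g i = 0 := fun i => by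
      have h1 := hg i
      have h2 := hg' i
      simp only [toAdd_inv, Pi.neg_apply] at h2
      omega
    have : Multiplicative.toAdd g = 0 := funext h
    simpa using this
  lub_exists := fun p hp q hq _ => by
    refine ⟨Multiplicative.ofAdd
      (fun i => max (Multiplicative.toAdd p i) (Multiplicative.toAdd q i)), ?_, ?_, ?_, ?_⟩
    · intro i
      have := hp i
      simp only [toAdd_ofAdd]
      omega
    · intro i
      simp only [toAdd_mul, toAdd_inv, Pi.add_apply,
        Pi.neg_apply, toAdd_ofAdd]
      omega
    · intro i
      simp only [toAdd_mul, toAdd_inv, Pi.add_apply,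
        Pi.neg_apply, toAdd_ofAdd]
      omega
    · intro s _ hps hqs i
      have h1 := hps i
      have h2 := hqs i
      simp only [toAdd_mul, toAdd_inv, Pi.add_apply,
        Pi.neg_apply, toAdd_ofAdd] at h1 h2 ⊢
      omega


/-!
Because `α` preserves `P`, the order of `P ⋊_α S` is the product of the orders of `P` and `S`, so
least upper bounds are computed coordinatewise; with `ϑ_N ∘ α_h = ϑ_N` making `ϑ` multiplicative,
`ϑ` is `ϑ_N × ϑ_M` read in `ℤ^{N+M} = ℤ^N × ℤ^M`. A minimal element of `ϑ⁻¹([m,∞]) ∩ (P ⋊ S)`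
has minimal coordinates for the two halves of `m`: replacing one coordinate by a smaller one that
still meets its half of `m` gives a smaller element of the same set. Two distinct minimal elements differ in some coordinate, and a common upper bound
of them would be a common upper bound of two distinct minimal elements for `ϑ_N` or for `ϑ_M`.
-/

open Multiplicative

namespace QuasiLattice

variable {G : Type*} [Group G]

theorem le_refl (Q : QuasiLattice G) (g : G) : Q.le g g := by
  simpa [QuasiLattice.le] using Q.one_mem

variable {H : Type*} [Group H] {α : H →* MulAut G}

/-- `QSD` is the quasi-lattice `(G ⋊_α H, P ⋊_α S)` built from `(G, P)` and `(H, S)`. -/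
structure IsSemidirectProduct (QSD : QuasiLattice (G ⋊[α] H)) (Q : QuasiLattice G)
    (QS : QuasiLattice H) : Prop where
  map_mem_iff : ∀ s ∈ QS.P, ∀ g : G, g ∈ Q.P ↔ α s g ∈ Q.P
  P_eq : QSD.P = {x : G ⋊[α] H | x.left ∈ Q.P ∧ x.right ∈ QS.P}

namespace IsSemidirectProduct

variable {QSD : QuasiLattice (G ⋊[α] H)} {Q : QuasiLattice G} {QS : QuasiLattice H}

theorem mem_iff (hSD : QSD.IsSemidirectProduct Q QS) {x : G ⋊[α] H} :
    x ∈ QSD.P ↔ x.left ∈ Q.P ∧ x.right ∈ QS.P := by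
  rw [hSD.P_eq]; rfl

theorem map_inv_mem_iff (hSD : QSD.IsSemidirectProduct Q QS) {s : H} (hs : s ∈ QS.P) (g : G) :
    α s⁻¹ g ∈ Q.P ↔ g ∈ Q.P := by
  rw [hSD.map_mem_iff s hs, ← MulAut.mul_apply, ← map_mul, mul_inv_cancel, map_one,
    MulAut.one_apply]

theorem le_iff (hSD : QSD.IsSemidirectProduct Q QS) {x y : G ⋊[α] H} (hx : x.right ∈ QS.P) :
    QSD.le x y ↔ Q.le x.left y.left ∧ QS.le x.right y.right := by
  have hleft : (x⁻¹ * y).left = α x.right⁻¹ (x.left⁻¹ * y.left) := by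
    rw [SemidirectProduct.mul_left, SemidirectProduct.inv_left, SemidirectProduct.inv_right,
      map_mul]
  rw [QuasiLattice.le, hSD.mem_iff, hleft, hSD.map_inv_mem_iff hx]
  rfl

theorem isLub_left_right (hSD : QSD.IsSemidirectProduct Q QS) {p q r : G ⋊[α] H}
    (hp : p.right ∈ QS.P) (hq : q.right ∈ QS.P) (hpqr : QSD.IsLub p q r) :
    Q.IsLub p.left q.left r.left ∧ QS.IsLub p.right q.right r.right := by
  obtain ⟨hr, hpr, hqr, hleast⟩ := hpqr
  obtain ⟨hr₁, hr₂⟩ := hSD.mem_iff.1 hr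
  obtain ⟨hpr₁, hpr₂⟩ := (hSD.le_iff hp).1 hpr
  obtain ⟨hqr₁, hqr₂⟩ := (hSD.le_iff hq).1 hqr
  refine ⟨⟨hr₁, hpr₁, hqr₁, fun s hs hps hqs => ?_⟩, ⟨hr₂, hpr₂, hqr₂, fun s hs hps hqs => ?_⟩⟩
  · have := hleast ⟨s, r.right⟩ (hSD.mem_iff.2 ⟨hs, hr₂⟩) ((hSD.le_iff hp).2 ⟨hps, hpr₂⟩)
      ((hSD.le_iff hq).2 ⟨hqs, hqr₂⟩)
    exact ((hSD.le_iff hr₂).1 this).1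
  · have := hleast ⟨r.left, s⟩ (hSD.mem_iff.2 ⟨hr₁, hs⟩) ((hSD.le_iff hp).2 ⟨hpr₁, hps⟩)
      ((hSD.le_iff hq).2 ⟨hqr₁, hqs⟩)
    exact ((hSD.le_iff hr₂).1 this).2

theorem hasCUB_left_right (hSD : QSD.IsSemidirectProduct Q QS) {p q : G ⋊[α] H}
    (hp : p.right ∈ QS.P) (hq : q.right ∈ QS.P) (hpq : QSD.HasCUB p q) :
    Q.HasCUB p.left q.left ∧ QS.HasCUB p.right q.right := by
  obtain ⟨r, hr, hpr, hqr⟩ := hpq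
  obtain ⟨hr₁, hr₂⟩ := hSD.mem_iff.1 hr
  obtain ⟨hpr₁, hpr₂⟩ := (hSD.le_iff hp).1 hpr
  obtain ⟨hqr₁, hqr₂⟩ := (hSD.le_iff hq).1 hqr
  exact ⟨⟨r.left, hr₁, hpr₁, hqr₁⟩, ⟨r.right, hr₂, hpr₂, hqr₂⟩⟩

variable {K₁ K₂ K' : Type*} [Group K₁] [Group K₂] [Group K']
  {Q₁ : QuasiLattice K₁} {Q₂ : QuasiLattice K₂} {Q' : QuasiLattice K'}

theorem minimal_left_right (hSD : QSD.IsSemidirectProduct Q QS) {θ₁ : ControlledMap Q Q₁}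
    {θ₂ : ControlledMap QS Q₂} (θ : ControlledMap QSD Q') {m : K'} {m₁ : K₁} {m₂ : K₂}
    (hm : ∀ x, Q'.le m (θ.toFun x) ↔ Q₁.le m₁ (θ₁.toFun x.left) ∧ Q₂.le m₂ (θ₂.toFun x.right))
    {p : G ⋊[α] H} (hp : θ.Minimal m p) : θ₁.Minimal m₁ p.left ∧ θ₂.Minimal m₂ p.right := by
  obtain ⟨hpP, hmp, hleast⟩ := hp
  obtain ⟨hp₁, hp₂⟩ := hSD.mem_iff.1 hpP
  obtain ⟨hmp₁, hmp₂⟩ := (hm p).1 hmp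
  refine ⟨⟨hp₁, hmp₁, fun r hr hmr hrp => ?_⟩, ⟨hp₂, hmp₂, fun r hr hmr hrp => ?_⟩⟩
  · exact congrArg SemidirectProduct.left <| hleast ⟨r, p.right⟩ (hSD.mem_iff.2 ⟨hr, hp₂⟩)
      ((hm _).2 ⟨hmr, hmp₂⟩) ((hSD.le_iff (x := ⟨r, p.right⟩) hp₂).2 ⟨hrp, QS.le_refl _⟩)
  · exact congrArg SemidirectProduct.right <| hleast ⟨p.left, r⟩ (hSD.mem_iff.2 ⟨hp₁, hr⟩)
      ((hm _).2 ⟨hmp₁, hmr⟩) ((hSD.le_iff (x := ⟨p.left, r⟩) hr).2 ⟨Q.le_refl _, hrp⟩)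

theorem minimalityProperty (hSD : QSD.IsSemidirectProduct Q QS) {θ₁ : ControlledMap Q Q₁}
    {θ₂ : ControlledMap QS Q₂} (θ : ControlledMap QSD Q') (h₁ : θ₁.MinimalityProperty)
    (h₂ : θ₂.MinimalityProperty)
    (hsplit : ∀ m ∈ Q'.P, ∃ m₁ ∈ Q₁.P, ∃ m₂ ∈ Q₂.P, ∀ x,
      Q'.le m (θ.toFun x) ↔ Q₁.le m₁ (θ₁.toFun x.left) ∧ Q₂.le m₂ (θ₂.toFun x.right)) :
    θ.MinimalityProperty := by
  intro m hm p q hp hq hpq hcub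
  obtain ⟨m₁, hm₁, m₂, hm₂, hsplit⟩ := hsplit m hm
  obtain ⟨hp₁, hp₂⟩ := hSD.minimal_left_right θ hsplit hp
  obtain ⟨hq₁, hq₂⟩ := hSD.minimal_left_right θ hsplit hq
  obtain ⟨hcub₁, hcub₂⟩ := hSD.hasCUB_left_right hp₂.1 hq₂.1 hcub
  by_cases hleft : p.left = q.left
  · exact h₂ m₂ hm₂ _ _ hp₂ hq₂ (fun hright => hpq (SemidirectProduct.ext hleft hright)) hcub₂
  · exact h₁ m₁ hm₁ _ _ hp₁ hq₁ hleft hcub₁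

end IsSemidirectProduct

end QuasiLattice

namespace ZQL

theorem le_iff {κ : Type*} (x y : Multiplicative (κ → ℤ)) :
    (ZQL κ).le x y ↔ toAdd x ≤ toAdd y := by
  change (∀ i, 0 ≤ toAdd (x⁻¹ * y) i) ↔ _
  simp only [toAdd_mul, toAdd_inv, Pi.add_apply, Pi.neg_apply, Pi.le_def, neg_add_eq_sub,
    sub_nonneg]

variable (n m : ℕ)

def appendEquiv :
    Multiplicative (Fin n → ℤ) × Multiplicative (Fin m → ℤ) ≃* Multiplicative (Fin (n + m) → ℤ)
    where
  toFun x := ofAdd (Fin.append (toAdd x.1) (toAdd x.2))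
  invFun y := (ofAdd fun i => toAdd y (Fin.castAdd m i), ofAdd fun i => toAdd y (Fin.natAdd n i))
  left_inv x := by simp
  right_inv y := by simp [Fin.append_castAdd_natAdd]
  map_mul' x y := by
    simp only [Prod.fst_mul, Prod.snd_mul, toAdd_mul, ← ofAdd_add]
    congr 1
    funext i
    refine Fin.addCases (fun j => ?_) (fun j => ?_) i <;> simp

theorem toAdd_appendEquiv (x : Multiplicative (Fin n → ℤ) × Multiplicative (Fin m → ℤ)) :
    toAdd (appendEquiv n m x) = Fin.append (toAdd x.1) (toAdd x.2) :=
  rfl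

variable {n m}

theorem le_appendEquiv_iff (x y : Multiplicative (Fin n → ℤ) × Multiplicative (Fin m → ℤ)) :
    (ZQL _).le (appendEquiv n m x) (appendEquiv n m y) ↔
      (ZQL _).le x.1 y.1 ∧ (ZQL _).le x.2 y.2 := by
  simp only [le_iff, toAdd_appendEquiv, Pi.le_def, Fin.forall_fin_add, Fin.append_left,
    Fin.append_right]

theorem appendEquiv_mem_iff (x : Multiplicative (Fin n → ℤ) × Multiplicative (Fin m → ℤ)) :
    appendEquiv n m x ∈ (ZQL _).P ↔ x.1 ∈ (ZQL _).P ∧ x.2 ∈ (ZQL _).P := by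
  simp only [ZQL, Set.mem_ofPred_eq, toAdd_appendEquiv, Fin.forall_fin_add, Fin.append_left,
    Fin.append_right]

theorem isLub_appendEquiv {x y z : Multiplicative (Fin n → ℤ) × Multiplicative (Fin m → ℤ)}
    (h₁ : (ZQL _).IsLub x.1 y.1 z.1) (h₂ : (ZQL _).IsLub x.2 y.2 z.2) :
    (ZQL _).IsLub (appendEquiv n m x) (appendEquiv n m y) (appendEquiv n m z) := by
  obtain ⟨hz₁, hxz₁, hyz₁, hleast₁⟩ := h₁
  obtain ⟨hz₂, hxz₂, hyz₂, hleast₂⟩ := h₂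
  refine ⟨(appendEquiv_mem_iff z).2 ⟨hz₁, hz₂⟩, (le_appendEquiv_iff x z).2 ⟨hxz₁, hxz₂⟩,
    (le_appendEquiv_iff y z).2 ⟨hyz₁, hyz₂⟩, fun s hs hxs hys => ?_⟩
  obtain ⟨s, rfl⟩ := (appendEquiv n m).surjective s
  rw [appendEquiv_mem_iff] at hs
  rw [le_appendEquiv_iff] at hxs hys ⊢
  exact ⟨hleast₁ _ hs.1 hxs.1 hys.1, hleast₂ _ hs.2 hxs.2 hys.2⟩

end ZQL

namespace SemidirectProduct

variable {G H K₁ K₂ : Type*} [Group G] [Group H] [Group K₁] [Group K₂] {α : H →* MulAut G}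

def homProd (φ : G →* K₁) (ψ : H →* K₂) (hφ : ∀ h g, φ (α h g) = φ g) : G ⋊[α] H →* K₁ × K₂ where
  toFun x := (φ x.left, ψ x.right)
  map_one' := by simp
  map_mul' x y := by simp [hφ]

end SemidirectProduct

namespace ControlledMap

variable {G H : Type*} [Group G] [Group H] {α : H →* MulAut G} {QSD : QuasiLattice (G ⋊[α] H)}
  {Q : QuasiLattice G} {QS : QuasiLattice H} {N M : ℕ}

def semidirectProduct (hSD : QSD.IsSemidirectProduct Q QS) (θN : ControlledMap Q (ZQL (Fin N)))
    (θM : ControlledMap QS (ZQL (Fin M)))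
    (hinv : ∀ (h : H) (g : G), θN.toFun (α h g) = θN.toFun g) :
    ControlledMap QSD (ZQL (Fin (N + M))) where
  toFun := (ZQL.appendEquiv N M).toMonoidHom.comp (SemidirectProduct.homProd θN.toFun θM.toFun hinv)
  mapsP p hp := by
    obtain ⟨hp₁, hp₂⟩ := hSD.mem_iff.1 hp
    exact (ZQL.appendEquiv_mem_iff _).2 ⟨θN.mapsP _ hp₁, θM.mapsP _ hp₂⟩
  finite_fibers y := by
    refine (((θN.finite_fibers ((ZQL.appendEquiv N M).symm y).1).prod
      (θM.finite_fibers ((ZQL.appendEquiv N M).symm y).2)).preimage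
      SemidirectProduct.equivProd.injective.injOn).subset ?_
    rintro p ⟨hp, rfl⟩
    obtain ⟨hp₁, hp₂⟩ := hSD.mem_iff.1 hp
    simp [hp₁, hp₂, SemidirectProduct.homProd]
  map_lub p hp q hq r hpqr := by
    obtain ⟨hp₁, hp₂⟩ := hSD.mem_iff.1 hp
    obtain ⟨hq₁, hq₂⟩ := hSD.mem_iff.1 hq
    obtain ⟨hlub₁, hlub₂⟩ := hSD.isLub_left_right hp₂ hq₂ hpqr
    exact ZQL.isLub_appendEquiv (θN.map_lub _ hp₁ _ hq₁ _ hlub₁) (θM.map_lub _ hp₂ _ hq₂ _ hlub₂)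

end ControlledMap

/-- If `ϑ_N : (G,P) → (ℤ^N, ℤ₊^N)` and `ϑ_M : (H,S) → (ℤ^M, ℤ₊^M)` are
controlled maps with the minimality property, and `α : H → Aut(G)` restricts to
automorphisms of `P` and satisfies `ϑ_N ∘ α_h = ϑ_N`, then the induced map
`ϑ(gh) = (ϑ_N(g), ϑ_M(h))` on `(G ⋊_α H, P ⋊_α S)` is a controlled map into
`(ℤ^{N+M}, ℤ₊^{N+M})` with the minimality property. -/
theorem semidirectProduct_controlledMap_minimality {G H : Type*} [Group G] [Group H]
    {N M : ℕ} {Q : QuasiLattice G} {QS : QuasiLattice H}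
    (θN : ControlledMap Q (ZQL (Fin N))) (θM : ControlledMap QS (ZQL (Fin M)))
    (hminN : θN.MinimalityProperty) (hminM : θM.MinimalityProperty)
    (α : H →* MulAut G)
    (hα : ∀ s ∈ QS.P, ∀ g : G, g ∈ Q.P ↔ α s g ∈ Q.P)
    (hinv : ∀ (h : H) (g : G), θN.toFun (α h g) = θN.toFun g)
    (QSD : QuasiLattice (G ⋊[α] H))
    (hQSD : QSD.P = {x : G ⋊[α] H | x.left ∈ Q.P ∧ x.right ∈ QS.P}) :
    ∃ θ : ControlledMap QSD (ZQL (Fin (N + M))),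
      (∀ x : G ⋊[α] H, Multiplicative.toAdd (θ.toFun x) =
        Fin.append (Multiplicative.toAdd (θN.toFun x.left))
          (Multiplicative.toAdd (θM.toFun x.right))) ∧
      θ.MinimalityProperty := by
  have hSD : QSD.IsSemidirectProduct Q QS := ⟨hα, hQSD⟩
  refine ⟨.semidirectProduct hSD θN θM hinv, fun _ => rfl, ?_⟩
  refine hSD.minimalityProperty _ hminN hminM fun m hm => ?_
  obtain ⟨m, rfl⟩ := (ZQL.appendEquiv N M).surjective m
  obtain ⟨hm₁, hm₂⟩ := (ZQL.appendEquiv_mem_iff m).1 hm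
  exact ⟨m.1, hm₁, m.2, hm₂, fun x => ZQL.le_appendEquiv_iff m _⟩
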